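/- arXiv:1710.01924 — 3 statements merged into one kernel-verified Lean document; each statement's English description precedes it below -/
import Mathlib

section
/- Let $M$ be a rank-$r$ sparse paving matroid on ground set $E$, and suppose there are pairwise disjoint sets $X_1, X_2, X_3, X_4, Y, Z_1, Z_2 \subseteq E$ with $|X_i| = 2$ for each $i$ and $|Y \cup Z_1 \cup Z_2| = r-4$, such that, setting $A = X_1 \cup Y \cup Z_1 \cup Z_2$, $B = X_2 \cup Y \cup Z_1 \cup Z_2$, $C = X_3 \cup Y \cup Z_1$, $D = X_4 \cup Y \cup Z_2$, each of $A \cup B$, $A \cup C$, $A \cup D$, $B \cup C$, $B \cup D$ is a circuit-hyperplane of $M$ and $C \cup D$ is a basis. Then $A, B, C, D$ violate Ingleton's inequality in $M$. -/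
open Set

/-- The (ℕ-valued) rank of a set `X` in a matroid `M`: the largest size of an independent
subset of `X`. -/
noncomputable def Matroid.rankN {α : Type*} (M : Matroid α) (X : Set α) : ℕ :=
  sSup {n : ℕ | ∃ I, M.Indep I ∧ I ⊆ X ∧ I.ncard = n}

/-- A circuit of a matroid: a minimal dependent set. -/
def Matroid.IsCircuit' {α : Type*} (M : Matroid α) (C : Set α) : Prop :=
  C ⊆ M.E ∧ ¬ M.Indep C ∧ ∀ D : Set α, D ⊂ C → M.Indep D

/-- A hyperplane of a matroid: a maximal nonspanning subset of the ground set. -/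
def Matroid.IsHyperplane' {α : Type*} (M : Matroid α) (H : Set α) : Prop :=
  H ⊆ M.E ∧ ¬ M.Spanning H ∧ ∀ X : Set α, H ⊂ X → X ⊆ M.E → M.Spanning X

/-- A circuit-hyperplane: a set that is simultaneously a circuit and a hyperplane. -/
def Matroid.IsCircuitHyperplane {α : Type*} (M : Matroid α) (H : Set α) : Prop :=
  M.IsCircuit' H ∧ M.IsHyperplane' H

/-- A paving matroid: every circuit is spanning. -/
def Matroid.IsPaving {α : Type*} (M : Matroid α) : Prop :=
  ∀ C, M.IsCircuit' C → M.Spanning C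

/-- A sparse paving matroid: both `M` and its dual are paving. -/
def Matroid.IsSparsePaving {α : Type*} (M : Matroid α) : Prop :=
  M.IsPaving ∧ M✶.IsPaving

/-- Ingleton's inequality holds for the quadruple `(A,B,C,D)` in `M`. -/
def Matroid.IngletonQuad {α : Type*} (M : Matroid α) (A B C D : Set α) : Prop :=
  M.rankN A + M.rankN B + M.rankN (A ∪ B ∪ C) + M.rankN (A ∪ B ∪ D) + M.rankN (C ∪ D)
    ≤ M.rankN (A ∪ B) + M.rankN (A ∪ C) + M.rankN (A ∪ D)
        + M.rankN (B ∪ C) + M.rankN (B ∪ D)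

/-- An Ingleton matroid: every quadruple of subsets of the ground set satisfies
Ingleton's inequality. -/
def Matroid.IsIngleton {α : Type*} (M : Matroid α) : Prop :=
  ∀ A B C D : Set α, A ⊆ M.E → B ⊆ M.E → C ⊆ M.E → D ⊆ M.E → M.IngletonQuad A B C D

/-- A nonbasis of a rank-`r` matroid: an `r`-element subset of the ground set that is
not a basis. -/
def Matroid.IsNonbasis {α : Type*} (M : Matroid α) (r : ℕ) (X : Set α) : Prop :=
  X ⊆ M.E ∧ X.ncard = r ∧ ¬ M.IsBase X

/-- A matroid is representable over `ℝ` if there is an assignment of real column vectors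
to the ground set under which independence coincides with linear independence. -/
def Matroid.RealRepresentable {α : Type*} (M : Matroid α) : Prop :=
  ∃ (d : ℕ) (v : α → (Fin d → ℝ)),
    ∀ I : Set α, I ⊆ M.E → (M.Indep I ↔ LinearIndependent ℝ (fun x : I => v x))

/-! A circuit-hyperplane of a rank-`r` matroid has rank `r - 1`. Here `A` and `B` are proper
subsets of the circuit `A ∪ B`, hence independent of rank `r - 2`; `A ∪ B ∪ C` and `A ∪ B ∪ D`
properly contain the hyperplane `A ∪ B`, so they span, as does the basis `C ∪ D`. The left side
of Ingleton's inequality is then `2(r - 2) + 3r = 5r - 4`, while the right side is `5(r - 1)`. -/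

lemma Set.not_subset_of_disjoint {α : Type*} {s t u : Set α} (hu : u.Nonempty)
    (hut : u ⊆ t) (hus : Disjoint u s) : ¬ t ⊆ s :=
  let ⟨_, hx⟩ := hu
  fun hts => hus.notMem_of_mem_left hx (hts (hut hx))

namespace Matroid

variable {α : Type*} {M : Matroid α} {r : ℕ} {I X H A B C D : Set α}

lemma IsBasis'.rankN_eq [M.RankFinite] (hI : M.IsBasis' I X) : M.rankN X = I.ncard := by
  have hle : ∀ n ∈ {n : ℕ | ∃ J, M.Indep J ∧ J ⊆ X ∧ J.ncard = n}, n ≤ I.ncard := by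
    rintro _ ⟨J, hJ, hJX, rfl⟩
    have h := hJ.encard_le_eRk_of_subset hJX
    rw [← hI.encard_eq_eRk, ← hJ.finite.cast_ncard_eq, ← hI.indep.finite.cast_ncard_eq] at h
    exact_mod_cast h
  exact le_antisymm (csSup_le ⟨_, I, hI.indep, hI.subset, rfl⟩ hle)
    (le_csSup ⟨_, hle⟩ ⟨I, hI.indep, hI.subset, rfl⟩)

lemma cast_rankN [M.RankFinite] (X : Set α) : (M.rankN X : ℕ∞) = M.eRk X := by
  obtain ⟨I, hI⟩ := M.exists_isBasis' X
  rw [hI.rankN_eq, hI.indep.finite.cast_ncard_eq, hI.encard_eq_eRk]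

lemma eRank_eq_of_forall_isBase_ncard [M.RankFinite] (hr : ∀ B, M.IsBase B → B.ncard = r) :
    M.eRank = r := by
  obtain ⟨B, hB⟩ := M.exists_isBase
  rw [← hB.encard_eq_eRank, ← hB.finite.cast_ncard_eq, hr B hB]

lemma Indep.rankN_eq [M.RankFinite] (hI : M.Indep I) : M.rankN I = I.ncard := by
  exact_mod_cast (M.cast_rankN I).trans (hI.eRk_eq_encard.trans hI.finite.cast_ncard_eq.symm)

lemma Spanning.rankN_eq [M.RankFinite] (hX : M.Spanning X) (hr : M.eRank = r) :
    M.rankN X = r := by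
  exact_mod_cast (M.cast_rankN X).trans (hX.eRk_eq.trans hr)

lemma IsHyperplane'.rankN_add_one [M.RankFinite] (hH : M.IsHyperplane' H) (hr : M.eRank = r) :
    M.rankN H + 1 = r := by
  obtain ⟨hHE, hns, hmax⟩ := hH
  obtain ⟨e, heE, heH⟩ : ∃ e ∈ M.E, e ∉ H :=
    not_subset.1 fun hEH => hns (M.ground_spanning.superset hEH hHE)
  have hlt : (M.rankN H : ℕ∞) < r := by
    rw [cast_rankN, ← hr]
    exact lt_of_not_ge fun h => hns ((spanning_iff_eRk_le hHE).2 h)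
  have hle : (r : ℕ∞) ≤ M.rankN H + 1 := by
    rw [cast_rankN, ← hr,
      ← (hmax _ (ssubset_insert heH) (insert_subset heE hHE)).eRk_eq]
    exact M.eRk_insert_le_add_one e H
  norm_cast at hlt hle
  omega

theorem not_ingletonQuad_of_isCircuitHyperplane [M.RankFinite] (hr : M.eRank = r)
    (hA : A.ncard + 2 = r) (hB : B.ncard + 2 = r)
    (hAB : M.IsCircuitHyperplane (A ∪ B)) (hAC : M.IsHyperplane' (A ∪ C))
    (hAD : M.IsHyperplane' (A ∪ D)) (hBC : M.IsHyperplane' (B ∪ C))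
    (hBD : M.IsHyperplane' (B ∪ D)) (hCD : M.Spanning (C ∪ D))
    (nBA : ¬ B ⊆ A) (nAB : ¬ A ⊆ B) (nC : ¬ C ⊆ A ∪ B) (nD : ¬ D ⊆ A ∪ B) :
    ¬ M.IngletonQuad A B C D := by
  have hABC : M.Spanning (A ∪ B ∪ C) := hAB.2.2.2 _ (ssubset_union_left_iff.2 nC)
    (union_subset hAB.2.1 (subset_union_right.trans hAC.1))
  have hABD : M.Spanning (A ∪ B ∪ D) := hAB.2.2.2 _ (ssubset_union_left_iff.2 nD)
    (union_subset hAB.2.1 (subset_union_right.trans hAD.1))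
  have := (hAB.1.2.2 A (ssubset_union_left_iff.2 nBA)).rankN_eq
  have := (hAB.1.2.2 B (ssubset_union_right_iff.2 nAB)).rankN_eq
  have := hAB.2.rankN_add_one hr
  have := hAC.rankN_add_one hr
  have := hAD.rankN_add_one hr
  have := hBC.rankN_add_one hr
  have := hBD.rankN_add_one hr
  have := hABC.rankN_eq hr
  have := hABD.rankN_eq hr
  have := hCD.rankN_eq hr
  unfold IngletonQuad
  omega

end Matroid

theorem ingleton_violation_of_configuration_general {α : Type*}
    (M : Matroid α) [M.Finite] (r : ℕ)
    (hr : ∀ B, M.IsBase B → B.ncard = r)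
    (X₁ X₂ X₃ X₄ Y Z₁ Z₂ : Set α)
    (hdisj : ([X₁, X₂, X₃, X₄, Y, Z₁, Z₂] : List (Set α)).Pairwise Disjoint)
    (hX₁ : X₁.ncard = 2) (hX₂ : X₂.ncard = 2) (hX₃ : X₃.ncard = 2) (hX₄ : X₄.ncard = 2)
    (hYZ : (Y ∪ Z₁ ∪ Z₂).ncard + 4 = r)
    (A B C D : Set α)
    (hA : A = X₁ ∪ Y ∪ Z₁ ∪ Z₂) (hB : B = X₂ ∪ Y ∪ Z₁ ∪ Z₂)
    (hC : C = X₃ ∪ Y ∪ Z₁) (hD : D = X₄ ∪ Y ∪ Z₂)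
    (hAB : M.IsCircuitHyperplane (A ∪ B)) (hAC : M.IsCircuitHyperplane (A ∪ C))
    (hAD : M.IsCircuitHyperplane (A ∪ D)) (hBC : M.IsCircuitHyperplane (B ∪ C))
    (hBD : M.IsCircuitHyperplane (B ∪ D)) (hCD : M.IsBase (C ∪ D)) :
    ¬ M.IngletonQuad A B C D := by
  simp only [List.pairwise_cons, List.mem_cons, List.not_mem_nil, List.Pairwise.nil,
    forall_eq_or_imp, forall_eq, or_false] at hdisj
  subst hA hB hC hD
  have nonempty {X : Set α} (hX : X.ncard = 2) : X.Nonempty :=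
    nonempty_of_ncard_ne_zero (by omega)
  have card {X : Set α} (hX : X.ncard = 2) (hXW : Disjoint X (Y ∪ Z₁ ∪ Z₂))
      (hfin : (X ∪ Y ∪ Z₁ ∪ Z₂).Finite) : (X ∪ Y ∪ Z₁ ∪ Z₂).ncard + 2 = r := by
    simp only [union_assoc] at hfin hXW ⊢
    rw [ncard_union_eq hXW (hfin.subset subset_union_left) (hfin.subset subset_union_right)]
    simp only [← union_assoc]
    omega
  have finite {X : Set α} (hX : M.IsCircuitHyperplane X) : X.Finite :=
    M.ground_finite.subset hX.1.1
  refine Matroid.not_ingletonQuad_of_isCircuitHyperplane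
    (Matroid.eRank_eq_of_forall_isBase_ncard hr)
    (card hX₁ ?_ ((finite hAB).subset subset_union_left))
    (card hX₂ ?_ ((finite hAB).subset subset_union_right))
    hAB hAC.2 hAD.2 hBC.2 hBD.2 hCD.spanning
    (not_subset_of_disjoint (nonempty hX₂) (fun _ hx => by simp [hx]) ?_)
    (not_subset_of_disjoint (nonempty hX₁) (fun _ hx => by simp [hx]) ?_)
    (not_subset_of_disjoint (nonempty hX₃) (fun _ hx => by simp [hx]) ?_)
    (not_subset_of_disjoint (nonempty hX₄) (fun _ hx => by simp [hx]) ?_)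
  all_goals simp only [disjoint_union_right]; tauto

/-- In a rank-`r` sparse paving matroid, a configuration of pairwise disjoint sets
`X₁,X₂,X₃,X₄,Y,Z₁,Z₂` with `|Xᵢ| = 2`, `|Y ∪ Z₁ ∪ Z₂| = r - 4`, with the five indicated
unions circuit-hyperplanes and `C ∪ D` a basis, yields a violation of Ingleton's
inequality by `A,B,C,D`. -/
theorem ingleton_violation_of_configuration {α : Type*}
    (M : Matroid α) [M.Finite] (r : ℕ) (hsp : M.IsSparsePaving)
    (hr : ∀ B, M.IsBase B → B.ncard = r)
    (X₁ X₂ X₃ X₄ Y Z₁ Z₂ : Set α)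
    (hsub : X₁ ∪ X₂ ∪ X₃ ∪ X₄ ∪ Y ∪ Z₁ ∪ Z₂ ⊆ M.E)
    (hdisj : ([X₁, X₂, X₃, X₄, Y, Z₁, Z₂] : List (Set α)).Pairwise Disjoint)
    (hX₁ : X₁.ncard = 2) (hX₂ : X₂.ncard = 2) (hX₃ : X₃.ncard = 2) (hX₄ : X₄.ncard = 2)
    (hYZ : (Y ∪ Z₁ ∪ Z₂).ncard + 4 = r)
    (A B C D : Set α)
    (hA : A = X₁ ∪ Y ∪ Z₁ ∪ Z₂) (hB : B = X₂ ∪ Y ∪ Z₁ ∪ Z₂)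
    (hC : C = X₃ ∪ Y ∪ Z₁) (hD : D = X₄ ∪ Y ∪ Z₂)
    (hAB : M.IsCircuitHyperplane (A ∪ B)) (hAC : M.IsCircuitHyperplane (A ∪ C))
    (hAD : M.IsCircuitHyperplane (A ∪ D)) (hBC : M.IsCircuitHyperplane (B ∪ C))
    (hBD : M.IsCircuitHyperplane (B ∪ D)) (hCD : M.IsBase (C ∪ D)) :
    ¬ M.IngletonQuad A B C D :=
  ingleton_violation_of_configuration_general M r hr X₁ X₂ X₃ X₄ Y Z₁ Z₂ hdisj hX₁ hX₂ hX₃ hX₄ hYZ A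
    B C D hA hB hC hD hAB hAC hAD hBC hBD hCD
end

section
/- Let $M$ be a matroid in which some element $e$ lies in no nonbasis and $e$ is not a coloop. Then $M$ is the free extension of $M \setminus e$ by $e$; i.e., a set $I \subseteq E(M)$ is independent in $M$ iff either $e \notin I$ and $I$ is independent in $M \setminus e$, or $e \in I$, $|I| \le r(M)$, and $I \setminus \{e\}$ is independent in $M \setminus e$. -/
open Set

namespace Matroid

variable {α : Type*} {M : Matroid α} {r : ℕ} {e : α} {I J B : Set α}

lemma Indep.ncard_le_of_forall_isBase_ncard [M.Finite] (hr : ∀ B, M.IsBase B → B.ncard = r)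
    (hI : M.Indep I) : I.ncard ≤ r := by
  obtain ⟨B, hB, hIB⟩ := hI.exists_isBase_superset
  exact hr B hB ▸ ncard_le_ncard hIB (M.set_finite B hB.subset_ground)

lemma Indep.exists_isBase_superset_notMem (hI : M.Indep I) (heI : e ∉ I) (hB : M.IsBase B)
    (heB : e ∉ B) : ∃ B', M.IsBase B' ∧ I ⊆ B' ∧ e ∉ B' := by
  obtain ⟨B', hB', hIB', hB'IB⟩ := hI.exists_isBase_subset_union_isBase hB
  exact ⟨B', hB', hIB', fun he ↦ (hB'IB he).elim heI heB⟩

lemma isBase_insert_of_forall_isNonbasis_notMem [M.Finite]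
    (hnb : ∀ X, M.IsNonbasis r X → e ∉ X) (he : e ∈ M.E) (hJ : J ⊆ M.E) (heJ : e ∉ J)
    (hJr : J.ncard + 1 = r) : M.IsBase (insert e J) := by
  by_contra hnot
  refine hnb _ ⟨insert_subset he hJ, ?_, hnot⟩ (mem_insert e J)
  rw [ncard_insert_of_notMem heJ (M.set_finite J hJ), hJr]

/-- Extend `I \ {e}` to a basis avoiding `e`, shrink it to `r - 1` elements, and add `e` back:
the result has `r` elements and contains `e`, so it cannot be a nonbasis. -/
lemma indep_of_forall_isNonbasis_notMem [M.Finite] (hr : ∀ B, M.IsBase B → B.ncard = r)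
    (hnb : ∀ X, M.IsNonbasis r X → e ∉ X) (hcoloop : ∃ B, M.IsBase B ∧ e ∉ B) (he : e ∈ M.E)
    (heI : e ∈ I) (hIr : I.ncard ≤ r) (hI : M.Indep (I \ {e})) : M.Indep I := by
  obtain ⟨B₀, hB₀, heB₀⟩ := hcoloop
  obtain ⟨B, hB, hIB, heB⟩ := hI.exists_isBase_superset_notMem (by simp) hB₀ heB₀
  have hIe : (I \ {e}).ncard + 1 ≤ r := by
    rwa [ncard_sdiff_singleton_add_one heI (hI.finite.insert e |>.subset (by simp))]
  obtain ⟨J, hIJ, hJB, hJr⟩ :=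
    exists_subsuperset_card_eq hIB (n := r - 1) (by omega) (by rw [hr B hB]; omega)
  have hbase := isBase_insert_of_forall_isNonbasis_notMem hnb he (hJB.trans hB.subset_ground)
    (fun h ↦ heB (hJB h)) (by omega)
  exact hbase.indep.subset (insert_eq e J ▸ sdiff_subset_iff.1 hIJ)

end Matroid

theorem free_extension_of_no_nonbasis_general {α : Type*}
    (M : Matroid α) [M.Finite] (r : ℕ) (hr : ∀ B, M.IsBase B → B.ncard = r)
    (e : α)
    (hnb : ∀ X : Set α, M.IsNonbasis r X → e ∉ X)
    (hcoloop : ¬ ∀ B, M.IsBase B → e ∈ B) :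
    ∀ I : Set α, I ⊆ M.E →
      (M.Indep I ↔
        (e ∉ I ∧ (M.restrict (M.E \ {e})).Indep I) ∨
        (e ∈ I ∧ I.ncard ≤ r ∧ (M.restrict (M.E \ {e})).Indep (I \ {e}))) := by
  intro I hIE
  push Not at hcoloop
  by_cases heI : e ∈ I
  · simp only [Matroid.restrict_indep_iff, heI, not_true_eq_false, false_and, true_and, false_or,
      sdiff_subset_sdiff_left hIE, and_true]
    exact ⟨fun hI ↦ ⟨hI.ncard_le_of_forall_isBase_ncard hr, hI.sdiff _⟩,
      fun ⟨hIr, hI⟩ ↦ Matroid.indep_of_forall_isNonbasis_notMem hr hnb hcoloop (hIE heI) heI hIr hI⟩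
  · simp [heI, subset_sdiff_singleton hIE heI]

/-- If an element `e` of a rank-`r` matroid `M` lies in no nonbasis and is not a coloop,
then `M` is the free extension of `M \ e` by `e`: a set `I ⊆ E(M)` is independent in `M`
iff either `e ∉ I` and `I` is independent in `M \ e`, or `e ∈ I`, `|I| ≤ r(M)`, and
`I \ {e}` is independent in `M \ e`. -/
theorem free_extension_of_no_nonbasis {α : Type*}
    (M : Matroid α) [M.Finite] (r : ℕ) (hr : ∀ B, M.IsBase B → B.ncard = r)
    (e : α) (he : e ∈ M.E)
    (hnb : ∀ X : Set α, M.IsNonbasis r X → e ∉ X)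
    (hcoloop : ¬ ∀ B, M.IsBase B → e ∈ B) :
    ∀ I : Set α, I ⊆ M.E →
      (M.Indep I ↔
        (e ∉ I ∧ (M.restrict (M.E \ {e})).Indep I) ∨
        (e ∈ I ∧ I.ncard ≤ r ∧ (M.restrict (M.E \ {e})).Indep (I \ {e}))) :=
  free_extension_of_no_nonbasis_general M r hr e hnb hcoloop
end

section
/- Let $M$ be a rank-$r$ matroid with at most four nonbases such that no element of $E(M)$ lies in four nonbases, and suppose $M$ has a dependent set $Y$ with $|Y| = r - 1$. Then $|E(M)| \le r + 2$. -/
open Set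

/- Each `insert e Y` with `e ∈ E \ Y` is a nonbasis containing all of `Y`, and distinct `e` give
distinct nonbases. Fixing `y ∈ Y`, fewer than four nonbases contain `y`, so `|E \ Y| ≤ 3` and
`|E| ≤ (r - 1) + 3`. -/

namespace Matroid

variable {α : Type*} {M : Matroid α} {Y : Set α}

theorem Dep.isNonbasis_insert (hY : M.Dep Y) (hYfin : Y.Finite) {e : α} (he : e ∈ M.E \ Y) :
    M.IsNonbasis (Y.ncard + 1) (insert e Y) :=
  ⟨insert_subset he.1 hY.subset_ground, ncard_insert_of_notMem he.2 hYfin,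
    fun hB => hY.not_indep (hB.indep.subset (subset_insert e Y))⟩

theorem Dep.ncard_ground_diff_le_ncard_nonbases_mem [M.Finite] (hY : M.Dep Y) {y : α}
    (hy : y ∈ Y) :
    (M.E \ Y).ncard ≤ {X : Set α | M.IsNonbasis (Y.ncard + 1) X ∧ y ∈ X}.ncard := by
  have hYfin : Y.Finite := M.ground_finite.subset hY.subset_ground
  have hfin : {X : Set α | M.IsNonbasis (Y.ncard + 1) X ∧ y ∈ X}.Finite :=
    M.ground_finite.finite_subsets.subset fun X hX => hX.1.1
  refine ncard_le_ncard_of_injOn (fun e => insert e Y)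
    (fun e he => ⟨hY.isNonbasis_insert hYfin he, mem_insert_of_mem e hy⟩) ?_ hfin
  exact fun a ha b _ hab => (insert_inj ha.2).mp hab

end Matroid

theorem ground_small_of_dependent_set_general {α : Type*}
    (M : Matroid α) [M.Finite] (r : ℕ)
    (h3 : ∀ e ∈ M.E, {X : Set α | M.IsNonbasis r X ∧ e ∈ X}.ncard < 4)
    (Y : Set α) (hYE : Y ⊆ M.E) (hYdep : ¬ M.Indep Y) (hYcard : Y.ncard + 1 = r) :
    M.E.ncard ≤ r + 2 := by
  have hY : M.Dep Y := ⟨hYdep, hYE⟩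
  obtain ⟨y, hy⟩ := hY.nonempty
  have hdiff := hY.ncard_ground_diff_le_ncard_nonbases_mem hy
  rw [hYcard] at hdiff
  have hsplit := ncard_sdiff_add_ncard_of_subset hYE M.ground_finite
  have hfew := h3 y (hYE hy)
  omega

/-- A rank-`r` matroid with at most four nonbases, in which no element lies in four
nonbases, that has a dependent set of size `r - 1`, has at most `r + 2` elements. -/
theorem ground_small_of_dependent_set {α : Type*}
    (M : Matroid α) [M.Finite] (r : ℕ) (hr : ∀ B, M.IsBase B → B.ncard = r)
    (h4 : {X : Set α | M.IsNonbasis r X}.ncard ≤ 4)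
    (h3 : ∀ e ∈ M.E, {X : Set α | M.IsNonbasis r X ∧ e ∈ X}.ncard < 4)
    (Y : Set α) (hYE : Y ⊆ M.E) (hYdep : ¬ M.Indep Y) (hYcard : Y.ncard + 1 = r) :
    M.E.ncard ≤ r + 2 :=
  ground_small_of_dependent_set_general M r h3 Y hYE hYdep hYcard
end
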